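/- Let n ≥ 2 and let σ = (σ₁, σ₂) be a homeomorphism of the triangle T = {(x,y) : 0 ≤ x ≤ y ≤ 1} onto itself that fixes the diagonal Δ = {(t,t) : 0 ≤ t ≤ 1} pointwise. Define h : Fₙ([0,1]) → Fₙ([0,1]) by h(D) = D if |D| = 1, and otherwise h(D) = ψ([min D, max D], [σ₁(min D, max D), σ₂(min D, max D)])(D), where ψ(J,K) is the increasing linear homeomorphism of the interval J onto the interval K. Then h is a homeomorphism of Fₙ([0,1]) onto itself. -/

import Mathlib

open TopologicalSpace

/-- The `n`-th symmetric product `Fₙ(X)`: nonempty subsets of `X` with at most `n` points,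
topologized as a subspace of the hyperspace of nonempty compact sets with the Hausdorff
metric (which induces the Vietoris topology). -/
def SymmProd (X : Type*) [MetricSpace X] (n : ℕ) : Type _ :=
  {A : NonemptyCompacts X // (A : Set X).Finite ∧ (A : Set X).ncard ≤ n}

noncomputable instance {X : Type*} [MetricSpace X] {n : ℕ} : MetricSpace (SymmProd X n) := by
  unfold SymmProd; infer_instance

def SymmProd.toSet {X : Type*} [MetricSpace X] {n : ℕ} (A : SymmProd X n) : Set X := A.1

/-- The closed triangle in `ℝ²` with vertices `(0,0)`, `(0,1)`, `(1,1)`. -/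
def Tri : Set (ℝ × ℝ) := {p | 0 ≤ p.1 ∧ p.1 ≤ p.2 ∧ p.2 ≤ 1}

/-!
Write `e D = (min D, max D) ∈ Tri`. The map `h` sends `D` to its image under the increasing affine
map `rescale (e D) (σ (e D))` from the interval `e D` onto `σ (e D)`; on a singleton this is the
identity because `σ` fixes the diagonal, so no case split is needed. Monotonicity gives
`e ∘ h = σ ∘ e`, hence the map built from `σ⁻¹` inverts `h`. The endpoint map `e` is 1-Lipschitz
for the Hausdorff metric. Near a non-singleton `D₀` the affine maps depend continuously on `D` and
are Lipschitz, which gives continuity there; near a singleton `{x}`, `h D` lies in the interval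
`σ (e D)`, which shrinks to `σ (x, x) = (x, x)`.
-/

open Metric Set Filter Topology
open scoped NNReal

lemma hausdorffDist_image_le_of_forall_dist_le {α β : Type*} [PseudoMetricSpace β]
    {f g : α → β} {s : Set α} {r : ℝ} (hs : s.Nonempty) (h : ∀ x ∈ s, dist (f x) (g x) ≤ r) :
    hausdorffDist (f '' s) (g '' s) ≤ r := by
  obtain ⟨x, hx⟩ := hs
  refine hausdorffDist_le_of_mem_dist (dist_nonneg.trans (h x hx)) ?_ ?_
  · rintro _ ⟨y, hy, rfl⟩
    exact ⟨g y, mem_image_of_mem g hy, h y hy⟩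
  · rintro _ ⟨y, hy, rfl⟩
    exact ⟨f y, mem_image_of_mem f hy, dist_comm (f y) (g y) ▸ h y hy⟩

lemma LipschitzWith.hausdorffDist_image_le {α β : Type*} [PseudoMetricSpace α]
    [PseudoMetricSpace β] {g : α → β} {K : ℝ≥0} (hg : LipschitzWith K g)
    {s t : Set α} (hs : IsCompact s) (ht : IsCompact t) (hs' : s.Nonempty) (ht' : t.Nonempty) :
    hausdorffDist (g '' s) (g '' t) ≤ K * hausdorffDist s t := by
  have key : ∀ {u v : Set α}, IsCompact u → IsCompact v → v.Nonempty →
      ∀ x ∈ u, ∃ y ∈ v, dist x y ≤ hausdorffDist u v := by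
    intro u v hu hv hv' x hx
    obtain ⟨y, hy, hxy⟩ := hv.exists_infDist_eq_dist hv' x
    refine ⟨y, hy, hxy ▸ infDist_le_hausdorffDist_of_mem hx ?_⟩
    exact hausdorffEDist_ne_top_of_nonempty_of_bounded ⟨x, hx⟩ hv' hu.isBounded hv.isBounded
  refine hausdorffDist_le_of_mem_dist (mul_nonneg K.coe_nonneg hausdorffDist_nonneg) ?_ ?_
  · rintro _ ⟨x, hx, rfl⟩
    obtain ⟨y, hy, hxy⟩ := key hs ht ht' x hx
    exact ⟨g y, mem_image_of_mem g hy, (hg.dist_le_mul x y).trans (by gcongr)⟩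
  · rintro _ ⟨x, hx, rfl⟩
    obtain ⟨y, hy, hxy⟩ := key ht hs hs' x hx
    refine ⟨g y, mem_image_of_mem g hy, (hg.dist_le_mul x y).trans ?_⟩
    rw [hausdorffDist_comm] at hxy
    gcongr

section RealHausdorffDist

variable {s t : Set ℝ}

lemma csSup_le_csSup_add_hausdorffDist (hs : s.Nonempty) (ht : t.Nonempty) (ht' : BddAbove t)
    (hst : hausdorffEDist s t ≠ ⊤) : sSup s ≤ sSup t + hausdorffDist s t := by
  refine csSup_le hs fun x hx => ?_
  have : x - sSup t ≤ infDist x t := (le_infDist ht).2 fun y hy =>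
    calc x - sSup t ≤ x - y := by linarith [le_csSup ht' hy]
      _ ≤ dist x y := (le_abs_self _).trans_eq (Real.dist_eq x y).symm
  linarith [infDist_le_hausdorffDist_of_mem hx hst]

lemma csInf_le_csInf_add_hausdorffDist (hs : s.Nonempty) (ht : t.Nonempty) (ht' : BddBelow t)
    (hst : hausdorffEDist s t ≠ ⊤) : sInf t ≤ sInf s + hausdorffDist s t := by
  refine sub_le_iff_le_add.1 (le_csInf hs fun x hx => ?_)
  have : sInf t - x ≤ infDist x t := (le_infDist ht).2 fun y hy =>
    calc sInf t - x ≤ y - x := by linarith [csInf_le ht' hy]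
      _ ≤ dist x y := (le_abs_self _).trans_eq (by rw [Real.dist_eq, abs_sub_comm])
  linarith [infDist_le_hausdorffDist_of_mem hx hst]

lemma hausdorffDist_singleton_le_of_subset_Icc {m M x : ℝ} (hs : s.Nonempty)
    (hsub : s ⊆ Icc m M) : hausdorffDist s {x} ≤ dist (m, M) (x, x) := by
  have hle : ∀ y ∈ s, dist y x ≤ dist (m, M) (x, x) := fun y hy => by
    simp only [Prod.dist_eq, Real.dist_eq]
    obtain ⟨hmy, hyM⟩ := hsub hy
    rw [abs_le]
    constructor <;> linarith [neg_abs_le (m - x), le_abs_self (M - x),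
      le_max_left |m - x| |M - x|, le_max_right |m - x| |M - x|]
  obtain ⟨y, hy⟩ := hs
  refine hausdorffDist_le_of_mem_dist (dist_nonneg.trans (hle y hy)) ?_ ?_
  · exact fun z hz => ⟨x, rfl, hle z hz⟩
  · intro z hz
    rw [mem_singleton_iff] at hz
    exact ⟨y, hy, hz ▸ (dist_comm x y).trans_le (hle y hy)⟩

end RealHausdorffDist

noncomputable def rescaleRatio (p q : ℝ × ℝ) : ℝ := (q.2 - q.1) / (p.2 - p.1)

/-- The affine map with `p.1 ↦ q.1` and `p.2 ↦ q.2`. If `p.1 = p.2`, division by zero makes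
`rescaleRatio p q = 0`, so `rescale p q` is the constant `q.1`. -/
noncomputable def rescale (p q : ℝ × ℝ) (t : ℝ) : ℝ := q.1 + (t - p.1) * rescaleRatio p q

section Rescale

variable {p q : ℝ × ℝ}

@[simp]
lemma rescale_fst (p q : ℝ × ℝ) : rescale p q p.1 = q.1 := by simp [rescale]

lemma rescale_snd (h : p.1 = p.2 → q.1 = q.2) : rescale p q p.2 = q.2 := by
  rcases eq_or_ne p.1 p.2 with hp | hp
  · rw [← hp, rescale_fst, h hp]
  · have : p.2 - p.1 ≠ 0 := sub_ne_zero.2 hp.symm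
    simp only [rescale, rescaleRatio]
    field_simp
    ring

lemma rescale_eq_of_ne (h : p.1 ≠ p.2) (t : ℝ) :
    rescale p q t = (t - p.1) / (p.2 - p.1) * q.2 + (p.2 - t) / (p.2 - p.1) * q.1 := by
  have : p.2 - p.1 ≠ 0 := sub_ne_zero.2 h.symm
  simp only [rescale, rescaleRatio]
  field_simp
  ring

lemma continuous_rescale (p q : ℝ × ℝ) : Continuous (rescale p q) := by
  unfold rescale
  fun_prop

lemma rescaleRatio_nonneg (hp : p.1 ≤ p.2) (hq : q.1 ≤ q.2) : 0 ≤ rescaleRatio p q :=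
  div_nonneg (sub_nonneg.2 hq) (sub_nonneg.2 hp)

lemma rescale_monotone (hp : p.1 ≤ p.2) (hq : q.1 ≤ q.2) : Monotone (rescale p q) :=
  fun s t hst => by
    have := rescaleRatio_nonneg hp hq
    unfold rescale
    gcongr

lemma rescale_mapsTo (hp : p.1 ≤ p.2) (hq : q.1 ≤ q.2) :
    MapsTo (rescale p q) (Icc p.1 p.2) (Icc q.1 q.2) := by
  rintro t ⟨hpt, htp⟩
  have hle : (t - p.1) * rescaleRatio p q ≤ q.2 - q.1 :=
    calc (t - p.1) * rescaleRatio p q = (t - p.1) / (p.2 - p.1) * (q.2 - q.1) := by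
          rw [rescaleRatio]; ring
      _ ≤ 1 * (q.2 - q.1) := by
          gcongr
          exact div_le_one_of_le₀ (by linarith) (by linarith)
      _ = q.2 - q.1 := one_mul _
  have hnonneg : 0 ≤ (t - p.1) * rescaleRatio p q :=
    mul_nonneg (sub_nonneg.2 hpt) (rescaleRatio_nonneg hp hq)
  constructor <;> simp only [rescale] <;> linarith

lemma rescale_self_eqOn (p : ℝ × ℝ) : EqOn (rescale p p) id (Icc p.1 p.2) := by
  rintro t ⟨hpt, htp⟩
  rcases eq_or_ne p.1 p.2 with hp | hp
  · rw [le_antisymm htp (hp ▸ hpt), ← hp, rescale_fst, id]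
  · have : p.2 - p.1 ≠ 0 := sub_ne_zero.2 hp.symm
    simp [rescale, rescaleRatio, this]

lemma rescale_rescale (h : p.1 = p.2 ↔ q.1 = q.2) (t : ℝ) :
    rescale q p (rescale p q t) = rescale p p t := by
  by_cases hp : p.1 = p.2
  · simp [rescale, rescaleRatio, hp, h.1 hp]
  · have hp' : p.2 - p.1 ≠ 0 := sub_ne_zero.2 (Ne.symm hp)
    have hq' : q.2 - q.1 ≠ 0 := sub_ne_zero.2 (Ne.symm (mt h.2 hp))
    simp only [rescale, rescaleRatio]
    field_simp
    ring

lemma abs_rescale_sub_rescale_le (p q p' q' : ℝ × ℝ) (t : ℝ) :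
    |rescale p q t - rescale p' q' t| ≤
      |rescale p q 0 - rescale p' q' 0| + |t| * |rescaleRatio p q - rescaleRatio p' q'| := by
  have : rescale p q t - rescale p' q' t =
      (rescale p q 0 - rescale p' q' 0) + t * (rescaleRatio p q - rescaleRatio p' q') := by
    simp only [rescale]
    ring
  rw [this, ← abs_mul]
  exact abs_add_le _ _

lemma lipschitzWith_rescale (p q : ℝ × ℝ) : LipschitzWith ‖rescaleRatio p q‖₊ (rescale p q) :=
  LipschitzWith.of_dist_le_mul fun s t => by
    have : rescale p q s - rescale p q t = rescaleRatio p q * (s - t) := by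
      simp only [rescale]
      ring
    rw [Real.dist_eq, Real.dist_eq, this, abs_mul, coe_nnnorm, Real.norm_eq_abs]

lemma hausdorffDist_rescale_image_le {p' q' : ℝ × ℝ} {s t : Set ℝ} (hs : IsCompact s)
    (ht : IsCompact t) (hs' : s.Nonempty) (ht' : t.Nonempty) (hs1 : ∀ x ∈ s, |x| ≤ 1) :
    hausdorffDist (rescale p q '' s) (rescale p' q' '' t) ≤
      |rescale p q 0 - rescale p' q' 0| + |rescaleRatio p q - rescaleRatio p' q'| +
        ‖rescaleRatio p' q'‖₊ * hausdorffDist s t := by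
  have hfin : hausdorffEDist (rescale p q '' s) (rescale p' q' '' s) ≠ ⊤ :=
    hausdorffEDist_ne_top_of_nonempty_of_bounded (hs'.image _) (hs'.image _)
      (hs.image (continuous_rescale p q)).isBounded (hs.image (continuous_rescale p' q')).isBounded
  refine (hausdorffDist_triangle hfin).trans (add_le_add ?_
    ((lipschitzWith_rescale p' q').hausdorffDist_image_le hs ht hs' ht'))
  refine hausdorffDist_image_le_of_forall_dist_le hs' fun x hx => ?_
  refine (abs_rescale_sub_rescale_le p q p' q' x).trans ?_
  gcongr
  exact mul_le_of_le_one_left (abs_nonneg _) (hs1 x hx)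

end Rescale

def FixesDiagonal (σ : Tri ≃ₜ Tri) : Prop :=
  ∀ p : Tri, (p : ℝ × ℝ).1 = (p : ℝ × ℝ).2 → σ p = p

namespace FixesDiagonal

variable {σ : Tri ≃ₜ Tri}

lemma symm (hσ : FixesDiagonal σ) : FixesDiagonal σ.symm :=
  fun p hp => σ.symm_apply_eq.2 (hσ p hp).symm

lemma fst_eq_snd_iff (hσ : FixesDiagonal σ) (p : Tri) :
    (σ p : ℝ × ℝ).1 = (σ p : ℝ × ℝ).2 ↔ (p : ℝ × ℝ).1 = (p : ℝ × ℝ).2 := by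
  refine ⟨fun h => ?_, fun h => by rwa [hσ p h]⟩
  rwa [σ.injective (hσ _ h)] at h

end FixesDiagonal

namespace SymmProd

variable {n : ℕ}

section Image

variable {X Y : Type*} [MetricSpace X] [MetricSpace Y]

def image (f : X → Y) (D : SymmProd X n) : SymmProd Y n :=
  ⟨⟨⟨f '' D.toSet, (D.2.1.image f).isCompact⟩, D.1.nonempty.image f⟩,
    D.2.1.image f, (ncard_image_le D.2.1).trans D.2.2⟩

lemma toSet_image (f : X → Y) (D : SymmProd X n) : (D.image f).toSet = f '' D.toSet := rfl

lemma toSet_injective : Function.Injective (toSet : SymmProd X n → Set X) :=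
  fun _ _ h => Subtype.ext (NonemptyCompacts.ext h)

end Image

def realSet (D : SymmProd unitInterval n) : Set ℝ := (↑) '' D.toSet

lemma realSet_injective : Function.Injective (realSet : SymmProd unitInterval n → Set ℝ) :=
  (image_injective.2 Subtype.coe_injective).comp toSet_injective

lemma realSet_nonempty (D : SymmProd unitInterval n) : D.realSet.Nonempty := D.1.nonempty.image _

lemma realSet_finite (D : SymmProd unitInterval n) : D.realSet.Finite := D.2.1.image _

lemma realSet_subset_Icc (D : SymmProd unitInterval n) : D.realSet ⊆ Icc 0 1 := by
  rintro _ ⟨x, -, rfl⟩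
  exact x.2

lemma dist_eq_hausdorffDist (D E : SymmProd unitInterval n) :
    dist D E = hausdorffDist D.realSet E.realSet :=
  (hausdorffDist_image isometry_subtype_coe).symm

lemma hausdorffEDist_realSet_ne_top (D E : SymmProd unitInterval n) :
    hausdorffEDist D.realSet E.realSet ≠ ⊤ :=
  hausdorffEDist_ne_top_of_nonempty_of_bounded (realSet_nonempty D) (realSet_nonempty E)
    (realSet_finite D).isBounded (realSet_finite E).isBounded

noncomputable def endpoints (D : SymmProd unitInterval n) : Tri :=
  ⟨(sInf D.realSet, sSup D.realSet),
    le_csInf (realSet_nonempty D) fun _ hx => (realSet_subset_Icc D hx).1,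
    csInf_le_csSup (realSet_nonempty D) (realSet_finite D).bddBelow (realSet_finite D).bddAbove,
    csSup_le (realSet_nonempty D) fun _ hx => (realSet_subset_Icc D hx).2⟩

lemma realSet_subset_Icc_endpoints (D : SymmProd unitInterval n) :
    D.realSet ⊆ Icc (D.endpoints : ℝ × ℝ).1 (D.endpoints : ℝ × ℝ).2 :=
  fun _ hx => ⟨csInf_le (realSet_finite D).bddBelow hx, le_csSup (realSet_finite D).bddAbove hx⟩

lemma lipschitzWith_endpoints : LipschitzWith 1 (endpoints : SymmProd unitInterval n → Tri) :=
  LipschitzWith.of_dist_le_mul fun D E => by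
    have hDE := hausdorffEDist_realSet_ne_top D E
    have hED := hausdorffEDist_realSet_ne_top E D
    rw [NNReal.coe_one, one_mul, Subtype.dist_eq, Prod.dist_eq, Real.dist_eq, Real.dist_eq,
      dist_eq_hausdorffDist]
    refine max_le (abs_sub_le_iff.2 ⟨?_, ?_⟩) (abs_sub_le_iff.2 ⟨?_, ?_⟩)
    · have := csInf_le_csInf_add_hausdorffDist (realSet_nonempty E) (realSet_nonempty D)
        (realSet_finite D).bddBelow hED
      rw [hausdorffDist_comm] at this
      exact sub_le_iff_le_add'.2 this
    · exact sub_le_iff_le_add'.2 (csInf_le_csInf_add_hausdorffDist (realSet_nonempty D)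
        (realSet_nonempty E) (realSet_finite E).bddBelow hDE)
    · exact sub_le_iff_le_add'.2 (csSup_le_csSup_add_hausdorffDist (realSet_nonempty D)
        (realSet_nonempty E) (realSet_finite E).bddAbove hDE)
    · have := csSup_le_csSup_add_hausdorffDist (realSet_nonempty E) (realSet_nonempty D)
        (realSet_finite D).bddAbove hED
      rw [hausdorffDist_comm] at this
      exact sub_le_iff_le_add'.2 this

lemma realSet_eq_singleton {D : SymmProd unitInterval n}
    (h : (D.endpoints : ℝ × ℝ).1 = (D.endpoints : ℝ × ℝ).2) :
    D.realSet = {(D.endpoints : ℝ × ℝ).1} := by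
  have := realSet_subset_Icc_endpoints D
  rw [← h, Icc_self] at this
  exact (realSet_nonempty D).subset_singleton_iff.1 this

lemma ncard_toSet_eq_one_iff (D : SymmProd unitInterval n) :
    D.toSet.ncard = 1 ↔ (D.endpoints : ℝ × ℝ).1 = (D.endpoints : ℝ × ℝ).2 := by
  rw [← ncard_image_of_injective _ Subtype.coe_injective]
  change D.realSet.ncard = 1 ↔ _
  refine ⟨fun h => ?_, fun h => by rw [realSet_eq_singleton h, ncard_singleton]⟩
  obtain ⟨x, hx⟩ := ncard_eq_one.1 h
  simp [endpoints, hx]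

lemma dist_le_dist_endpoints (D : SymmProd unitInterval n) {E : SymmProd unitInterval n}
    (hE : (E.endpoints : ℝ × ℝ).1 = (E.endpoints : ℝ × ℝ).2) :
    dist D E ≤ dist D.endpoints E.endpoints := by
  rw [dist_eq_hausdorffDist, realSet_eq_singleton hE, Subtype.dist_eq]
  convert hausdorffDist_singleton_le_of_subset_Icc (realSet_nonempty D)
    (realSet_subset_Icc_endpoints D) using 3
  exact hE.symm

noncomputable def inducedMap (σ : Tri ≃ₜ Tri) (D : SymmProd unitInterval n) :
    SymmProd unitInterval n :=
  D.image fun x : unitInterval =>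
    projIcc (0 : ℝ) 1 zero_le_one (rescale D.endpoints (σ D.endpoints) x)

lemma realSet_inducedMap (σ : Tri ≃ₜ Tri) (D : SymmProd unitInterval n) :
    (inducedMap σ D).realSet = rescale D.endpoints (σ D.endpoints) '' D.realSet := by
  rw [realSet, inducedMap, toSet_image, image_image, realSet, image_image]
  refine image_congr fun x hx => ?_
  obtain ⟨hq₀, hq, hq₁⟩ := (σ D.endpoints).2
  have hmem := rescale_mapsTo D.endpoints.2.2.1 hq
    (realSet_subset_Icc_endpoints D (mem_image_of_mem _ hx))
  exact congrArg Subtype.val (projIcc_of_mem _ ⟨hq₀.trans hmem.1, hmem.2.trans hq₁⟩)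

lemma endpoints_inducedMap {σ : Tri ≃ₜ Tri} (hσ : FixesDiagonal σ)
    (D : SymmProd unitInterval n) :
    (inducedMap σ D).endpoints = σ D.endpoints := by
  have hmono := rescale_monotone D.endpoints.2.2.1 (σ D.endpoints).2.2.1
  have hcont := continuous_rescale D.endpoints (σ D.endpoints)
  refine Subtype.ext (Prod.ext ?_ ?_)
  · change sInf (inducedMap σ D).realSet = _
    rw [realSet_inducedMap, ← hmono.map_csInf_of_continuousAt hcont.continuousAt
      (realSet_nonempty D) (realSet_finite D).bddBelow]
    exact rescale_fst _ _
  · change sSup (inducedMap σ D).realSet = _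
    rw [realSet_inducedMap, ← hmono.map_csSup_of_continuousAt hcont.continuousAt
      (realSet_nonempty D) (realSet_finite D).bddAbove]
    exact rescale_snd (hσ.fst_eq_snd_iff _).2

lemma inducedMap_eq_self (σ : Tri ≃ₜ Tri) {D : SymmProd unitInterval n}
    (h : σ D.endpoints = D.endpoints) :
    inducedMap σ D = D :=
  realSet_injective <| by
    rw [realSet_inducedMap, h]
    exact ((rescale_self_eqOn _).mono (realSet_subset_Icc_endpoints D)).image_eq_self

lemma inducedMap_symm_inducedMap {σ : Tri ≃ₜ Tri} (hσ : FixesDiagonal σ)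
    (D : SymmProd unitInterval n) :
    inducedMap σ.symm (inducedMap σ D) = D :=
  realSet_injective <| by
    rw [realSet_inducedMap, endpoints_inducedMap hσ, σ.symm_apply_apply, realSet_inducedMap,
      image_image]
    rw [image_congr fun t (_ : t ∈ D.realSet) =>
      rescale_rescale (hσ.fst_eq_snd_iff D.endpoints).symm t]
    exact ((rescale_self_eqOn _).mono (realSet_subset_Icc_endpoints D)).image_eq_self

lemma continuous_inducedMap {σ : Tri ≃ₜ Tri} (hσ : FixesDiagonal σ) :
    Continuous (inducedMap σ (n := n)) := by
  have hpe : Continuous fun D : SymmProd unitInterval n => σ D.endpoints :=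
    σ.continuous.comp lipschitzWith_endpoints.continuous
  have he : Continuous fun D : SymmProd unitInterval n => (D.endpoints : ℝ × ℝ) :=
    continuous_subtype_val.comp lipschitzWith_endpoints.continuous
  have hσe : Continuous fun D : SymmProd unitInterval n => (σ D.endpoints : ℝ × ℝ) :=
    continuous_subtype_val.comp hpe
  refine continuous_iff_continuousAt.2 fun D₀ => tendsto_iff_dist_tendsto_zero.2 ?_
  by_cases h₀ : (D₀.endpoints : ℝ × ℝ).1 = (D₀.endpoints : ℝ × ℝ).2
  · have hfix : σ D₀.endpoints = D₀.endpoints := hσ _ h₀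
    refine squeeze_zero (fun _ => dist_nonneg) (fun D => ?_)
      (tendsto_iff_dist_tendsto_zero.1 (hpe.tendsto D₀))
    rw [← endpoints_inducedMap hσ, ← endpoints_inducedMap hσ]
    refine dist_le_dist_endpoints _ ?_
    rwa [endpoints_inducedMap hσ, hfix]
  · set c := fun D : SymmProd unitInterval n => rescale D.endpoints (σ D.endpoints) 0
    set r := fun D : SymmProd unitInterval n => rescaleRatio D.endpoints (σ D.endpoints)
    have hr : ContinuousAt r D₀ :=
      (hσe.snd.sub hσe.fst).continuousAt.div (he.snd.sub he.fst).continuousAt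
        (sub_ne_zero.2 (Ne.symm h₀))
    have hc : ContinuousAt c D₀ :=
      hσe.fst.continuousAt.add ((continuousAt_const.sub he.fst.continuousAt).mul hr)
    have hbound : ∀ D, dist (inducedMap σ D) (inducedMap σ D₀) ≤
        |c D - c D₀| + |r D - r D₀| + ‖r D₀‖₊ * dist D D₀ := fun D => by
      rw [dist_eq_hausdorffDist, dist_eq_hausdorffDist, realSet_inducedMap, realSet_inducedMap]
      refine hausdorffDist_rescale_image_le (realSet_finite D).isCompact
        (realSet_finite D₀).isCompact (realSet_nonempty D) (realSet_nonempty D₀) fun x hx => ?_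
      obtain ⟨hx₀, hx₁⟩ := realSet_subset_Icc D hx
      exact abs_le.2 ⟨by linarith, hx₁⟩
    have hlim : Tendsto (fun D => |c D - c D₀| + |r D - r D₀| + ‖r D₀‖₊ * dist D D₀)
        (𝓝 D₀) (𝓝 0) := by
      have : ContinuousAt (fun D => |c D - c D₀| + |r D - r D₀| + ‖r D₀‖₊ * dist D D₀) D₀ := by
        fun_prop
      simpa using this.tendsto
    exact squeeze_zero (fun _ => dist_nonneg) hbound hlim

noncomputable def inducedHomeomorph {σ : Tri ≃ₜ Tri} (hσ : FixesDiagonal σ) :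
    SymmProd unitInterval n ≃ₜ SymmProd unitInterval n where
  toFun := inducedMap σ
  invFun := inducedMap σ.symm
  left_inv := inducedMap_symm_inducedMap hσ
  right_inv D := by simpa using inducedMap_symm_inducedMap hσ.symm D
  continuous_toFun := continuous_inducedMap hσ
  continuous_invFun := continuous_inducedMap hσ.symm

end SymmProd

theorem stmt10_general (n : ℕ) (σ : Tri ≃ₜ Tri)
    (hdiag : ∀ p : Tri, (p : ℝ × ℝ).1 = (p : ℝ × ℝ).2 → σ p = p) :
    ∃ h : SymmProd unitInterval n ≃ₜ SymmProd unitInterval n,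
      ∀ D : SymmProd unitInterval n,
        (D.toSet.ncard = 1 → h D = D) ∧
        (D.toSet.ncard ≠ 1 →
          ∀ p : Tri, (p : ℝ × ℝ) =
              (sInf ((↑) '' D.toSet : Set ℝ), sSup ((↑) '' D.toSet : Set ℝ)) →
            ((↑) '' (h D).toSet : Set ℝ) =
              (fun t : ℝ =>
                  ((t - (p : ℝ × ℝ).1) / ((p : ℝ × ℝ).2 - (p : ℝ × ℝ).1)) *
                      (σ p : ℝ × ℝ).2 +
                    (((p : ℝ × ℝ).2 - t) / ((p : ℝ × ℝ).2 - (p : ℝ × ℝ).1)) *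
                      (σ p : ℝ × ℝ).1) '' ((↑) '' D.toSet : Set ℝ)) := by
  refine ⟨SymmProd.inducedHomeomorph hdiag, fun D => ⟨fun h₁ => ?_, fun h₁ p hp => ?_⟩⟩
  · exact SymmProd.inducedMap_eq_self σ (hdiag _ ((SymmProd.ncard_toSet_eq_one_iff D).1 h₁))
  · obtain rfl : p = D.endpoints := Subtype.ext hp
    refine (SymmProd.realSet_inducedMap σ D).trans (image_congr fun t _ => ?_)
    exact rescale_eq_of_ne (mt (SymmProd.ncard_toSet_eq_one_iff D).2 h₁) t

theorem stmt10 (n : ℕ) (hn : 2 ≤ n) (σ : Tri ≃ₜ Tri)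
    (hdiag : ∀ p : Tri, (p : ℝ × ℝ).1 = (p : ℝ × ℝ).2 → σ p = p) :
    ∃ h : SymmProd unitInterval n ≃ₜ SymmProd unitInterval n,
      ∀ D : SymmProd unitInterval n,
        (D.toSet.ncard = 1 → h D = D) ∧
        (D.toSet.ncard ≠ 1 →
          ∀ p : Tri, (p : ℝ × ℝ) =
              (sInf ((↑) '' D.toSet : Set ℝ), sSup ((↑) '' D.toSet : Set ℝ)) →
            ((↑) '' (h D).toSet : Set ℝ) =
              (fun t : ℝ =>
                  ((t - (p : ℝ × ℝ).1) / ((p : ℝ × ℝ).2 - (p : ℝ × ℝ).1)) *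
                      (σ p : ℝ × ℝ).2 +
                    (((p : ℝ × ℝ).2 - t) / ((p : ℝ × ℝ).2 - (p : ℝ × ℝ).1)) *
                      (σ p : ℝ × ℝ).1) '' ((↑) '' D.toSet : Set ℝ)) :=
  stmt10_general n σ hdiag
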